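/- arXiv:2406.15916 — 3 statements merged into one kernel-verified Lean document; each statement's English description precedes it below -/
import Mathlib

section
/- Let M be an (ε, δ) sample differentially private (n → k) compression scheme with compression function κ, let D be a probability distribution over a domain Z, and let E ⊆ Z be any event with p = D(E). For an input sample S = (z_1,…,z_n) ~ D^n, let Z(S) = (1/k)·Σ_{i ∈ κ(S)} 1[z_i ∈ E] be the fraction of selected indices whose data points belong to E. Then p·e^{−ε} − δn ≤ E[Z] ≤ p·e^{ε} + δn, where the expectation is over S and the internal randomness of κ. -/
open MeasureTheory

/-- The probability that a sample from the PMF `μ` lands in the set `T`. -/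
noncomputable def prob {α : Type*} (μ : PMF α) (T : Set α) : ℝ :=
  (μ.toOuterMeasure T).toReal

/-- Two samples are neighbors if they differ in exactly one entry. -/
def Neighbors {Z : Type*} {n : ℕ} (S S' : Fin n → Z) : Prop :=
  ∃ i, S i ≠ S' i ∧ ∀ j, j ≠ i → S j = S' j

/-!
Fix a slot `j` and an index `i`, and let `q S = P(κ(S)_j = i)`. Resampling the coordinate `S i`
turns `S` into a neighbour, so differential privacy puts `q` within a factor `e^ε` and an additive
`δ` of its average `Φ S = ∫ q (S[i ↦ z]) dD(z)` over that coordinate, in both directions. As `Φ S`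
does not depend on `S i`, it is independent of the event `S i ∈ E`; hence
`E[q · 1_E(S i)] ≤ e^ε p E[q] + δ p` and `p E[q] ≤ e^ε E[q · 1_E(S i)] + δ p`. Summing over `i`,
where `∑ i, E[q] = 1`, and averaging over `j` gives the two bounds.
-/

open Finset Function
open scoped ENNReal

section PMF

variable {α β : Type*}

theorem PMF.sum_coe_eq_one [Fintype α] (p : PMF α) : ∑ a, p a = 1 := by
  rw [← tsum_fintype (L := .unconditional _), p.tsum_coe]

theorem PMF.sum_mul_comp [Fintype α] [Fintype β] [DecidableEq β] (p : PMF α) (f : α → β)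
    (g : β → ℝ≥0∞) : ∑ a, p a * g (f a) = ∑ b, p.map f b * g b := by
  simp_rw [PMF.map_apply, tsum_fintype, Finset.sum_mul, ite_mul, zero_mul]
  rw [Finset.sum_comm]
  simp

theorem prob_nonneg (μ : PMF α) (T : Set α) : 0 ≤ prob μ T :=
  ENNReal.toReal_nonneg

theorem ofReal_prob (μ : PMF α) (T : Set α) :
    ENNReal.ofReal (prob μ T) = μ.toOuterMeasure T :=
  ENNReal.ofReal_toReal (by rw [PMF.toOuterMeasure_apply]; exact μ.tsum_coe_indicator_ne_top T)

variable [MeasurableSpace β] {κ : β → PMF α}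

theorem measurable_pmf_toOuterMeasure (hκ : ∀ T, Measurable fun b => prob (κ b) T) (T : Set α) :
    Measurable fun b => (κ b).toOuterMeasure T := by
  simp_rw [← ofReal_prob]
  exact ENNReal.measurable_ofReal.comp (hκ T)

theorem measurable_pmf_apply (hκ : ∀ T, Measurable fun b => prob (κ b) T) (a : α) :
    Measurable fun b => κ b a := by
  simp_rw [← PMF.toOuterMeasure_apply_singleton]
  exact measurable_pmf_toOuterMeasure hκ _

theorem measurable_pmf_map_apply {γ : Type*} (hκ : ∀ T, Measurable fun b => prob (κ b) T)
    (f : α → γ) (c : γ) : Measurable fun b => (κ b).map f c := by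
  simp_rw [← PMF.toOuterMeasure_apply_singleton, PMF.toOuterMeasure_map_apply]
  exact measurable_pmf_toOuterMeasure hκ _

end PMF

section ENNReal

theorem Set.toReal_indicator_one {Z : Type*} (E : Set Z) (z : Z) :
    (E.indicator (1 : Z → ℝ≥0∞) z).toReal = E.indicator (fun _ => (1 : ℝ)) z := by
  by_cases h : z ∈ E <;> simp [h]

theorem Set.indicator_one_ne_top {Z : Type*} (E : Set Z) (z : Z) :
    E.indicator (1 : Z → ℝ≥0∞) z ≠ ∞ := by
  by_cases h : z ∈ E <;> simp [h]

theorem ENNReal.inv_natCast_mul_sum_const {k : ℕ} (hk : k ≠ 0) (b : ℝ≥0∞) :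
    (k : ℝ≥0∞)⁻¹ * ∑ _j : Fin k, b = b := by
  rw [sum_const, card_univ, Fintype.card_fin, nsmul_eq_mul, ← mul_assoc,
    ENNReal.inv_mul_cancel (by exact_mod_cast hk) (ENNReal.natCast_ne_top k), one_mul]

variable {ι : Type*} [Fintype ι] {a b : ι → ℝ≥0∞} {p c d : ℝ≥0∞}

theorem ENNReal.sum_le_mul_add_card_mul (ha : ∑ i, a i = 1) (hp : p ≤ 1)
    (h : ∀ i, b i ≤ c * (a i * p) + d * p) : ∑ i, b i ≤ c * p + Fintype.card ι * d := calc
  ∑ i, b i ≤ ∑ i, (c * (a i * p) + d * p) := sum_le_sum fun i _ => h i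
  _ = c * p + Fintype.card ι * (d * p) := by
    rw [sum_add_distrib, ← mul_sum, ← sum_mul, ha, sum_const, card_univ, nsmul_eq_mul, one_mul]
  _ ≤ c * p + Fintype.card ι * d := by gcongr; exact mul_le_of_le_one_right' hp

theorem ENNReal.le_mul_sum_add_card_mul (ha : ∑ i, a i = 1) (hp : p ≤ 1)
    (h : ∀ i, a i * p ≤ c * b i + d * p) : p ≤ c * ∑ i, b i + Fintype.card ι * d := calc
  p = ∑ i, a i * p := by rw [← sum_mul, ha, one_mul]
  _ ≤ ∑ i, (c * b i + d * p) := sum_le_sum fun i _ => h i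
  _ = c * ∑ i, b i + Fintype.card ι * (d * p) := by
    rw [sum_add_distrib, ← mul_sum, sum_const, card_univ, nsmul_eq_mul]
  _ ≤ c * ∑ i, b i + Fintype.card ι * d := by gcongr; exact mul_le_of_le_one_right' hp

end ENNReal

section Resampling

variable {ι : Type*} {X : ι → Type*} [∀ i, MeasurableSpace (X i)] {μ : ∀ i, Measure (X i)}
  {i : ι} {f : X i → ℝ≥0∞} {c d : ℝ≥0∞}

theorem lintegral_affine_mul_apply [Fintype ι] [∀ i, IsProbabilityMeasure (μ i)]
    {φ : (∀ j, X j) → ℝ≥0∞} (hφ : Measurable φ) (hf : Measurable f) :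
    ∫⁻ x, (c * φ x + d) * f (x i) ∂Measure.pi μ
      = c * ∫⁻ x, φ x * f (x i) ∂Measure.pi μ + d * ∫⁻ y, f y ∂μ i := by
  simp_rw [add_mul, mul_assoc]
  rw [lintegral_add_left (by fun_prop), lintegral_const_mul _ (by fun_prop),
    lintegral_const_mul _ (by fun_prop), (measurePreserving_eval μ i).lintegral_comp hf]

variable [DecidableEq ι]

theorem Measurable.lintegral_update [SigmaFinite (μ i)] {φ : (∀ j, X j) → ℝ≥0∞}
    (hφ : Measurable φ) : Measurable fun x => ∫⁻ y, φ (update x i y) ∂μ i :=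
  (hφ.comp measurable_update').lintegral_prod_right'

theorem lintegral_lintegral_update_mul_apply [Fintype ι] [∀ i, SigmaFinite (μ i)]
    {φ : (∀ j, X j) → ℝ≥0∞} (hφ : Measurable φ) (hf : Measurable f) :
    ∫⁻ x, (∫⁻ y, φ (update x i y) ∂μ i) * f (x i) ∂Measure.pi μ
      = (∫⁻ x, φ x ∂Measure.pi μ) * ∫⁻ y, f y ∂μ i := by
  rw [← lintegral_mul_const _ hφ]
  -- The two integrands have the same marginal in the coordinate `i`.
  refine lintegral_eq_of_lmarginal_eq {i}
    (hφ.lintegral_update.mul (hf.comp (measurable_pi_apply i))) (hφ.mul_const _) ?_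
  ext x
  simp only [lmarginal_singleton, update_self, update_idem]
  rw [lintegral_const_mul _ hf]
  exact (lintegral_mul_const _ (hφ.comp (measurable_update x))).symm

variable {q : (∀ j, X j) → ℝ≥0∞}

theorem le_lintegral_update [IsProbabilityMeasure (μ i)] (hq : Measurable q)
    (hdp : ∀ x y, q x ≤ c * q (update x i y) + d) (x : ∀ j, X j) :
    q x ≤ c * ∫⁻ y, q (update x i y) ∂μ i + d := calc
  q x = ∫⁻ _, q x ∂μ i := by simp
  _ ≤ ∫⁻ y, c * q (update x i y) + d ∂μ i := lintegral_mono (hdp x)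
  _ = c * ∫⁻ y, q (update x i y) ∂μ i + d := by
    rw [lintegral_add_right _ measurable_const, lintegral_const_mul _ (by fun_prop)]
    simp

theorem lintegral_update_le [IsProbabilityMeasure (μ i)]
    (hdp : ∀ x y, q x ≤ c * q (update x i y) + d) (x : ∀ j, X j) :
    ∫⁻ y, q (update x i y) ∂μ i ≤ c * q x + d := calc
  ∫⁻ y, q (update x i y) ∂μ i ≤ ∫⁻ _, c * q x + d ∂μ i :=
    lintegral_mono fun y => by simpa using hdp (update x i y) (x i)
  _ = c * q x + d := by simp

variable [Fintype ι] [∀ i, IsProbabilityMeasure (μ i)]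

theorem lintegral_mul_apply_le (hq : Measurable q) (hdp : ∀ x y, q x ≤ c * q (update x i y) + d)
    (hf : Measurable f) :
    ∫⁻ x, q x * f (x i) ∂Measure.pi μ
      ≤ c * ((∫⁻ x, q x ∂Measure.pi μ) * ∫⁻ y, f y ∂μ i) + d * ∫⁻ y, f y ∂μ i := calc
  _ ≤ ∫⁻ x, (c * ∫⁻ y, q (update x i y) ∂μ i + d) * f (x i) ∂Measure.pi μ :=
    lintegral_mono fun x => by gcongr; exact le_lintegral_update hq hdp x
  _ = _ := by
    rw [lintegral_affine_mul_apply hq.lintegral_update hf,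
      lintegral_lintegral_update_mul_apply hq hf]

theorem lintegral_mul_lintegral_le (hq : Measurable q)
    (hdp : ∀ x y, q x ≤ c * q (update x i y) + d) (hf : Measurable f) :
    (∫⁻ x, q x ∂Measure.pi μ) * ∫⁻ y, f y ∂μ i
      ≤ c * ∫⁻ x, q x * f (x i) ∂Measure.pi μ + d * ∫⁻ y, f y ∂μ i := calc
  _ = ∫⁻ x, (∫⁻ y, q (update x i y) ∂μ i) * f (x i) ∂Measure.pi μ :=
    (lintegral_lintegral_update_mul_apply hq hf).symm
  _ ≤ ∫⁻ x, (c * q x + d) * f (x i) ∂Measure.pi μ :=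
    lintegral_mono fun x => by gcongr; exact lintegral_update_le hdp x
  _ = _ := lintegral_affine_mul_apply hq hf

end Resampling

section DifferentialPrivacy

variable {Z α : Type*} {n : ℕ}

def IsDifferentiallyPrivate (κ : (Fin n → Z) → PMF α) (ε δ : ℝ) : Prop :=
  ∀ S S', Neighbors S S' → ∀ T : Set α, prob (κ S) T ≤ Real.exp ε * prob (κ S') T + δ

theorem neighbors_update {S : Fin n → Z} {i : Fin n} {z : Z} (h : z ≠ S i) :
    Neighbors S (update S i z) :=
  ⟨i, by rwa [update_self, ne_comm], fun _ hj => (update_of_ne hj z S).symm⟩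

variable {κ : (Fin n → Z) → PMF α} {ε δ : ℝ}

theorem IsDifferentiallyPrivate.toOuterMeasure_le_update (hDP : IsDifferentiallyPrivate κ ε δ)
    (hε : 0 ≤ ε) (hδ : 0 ≤ δ) (S : Fin n → Z) (i : Fin n) (z : Z) (T : Set α) :
    (κ S).toOuterMeasure T
      ≤ ENNReal.ofReal (Real.exp ε) * (κ (update S i z)).toOuterMeasure T + ENNReal.ofReal δ := by
  rw [← ofReal_prob, ← ofReal_prob, ← ENNReal.ofReal_mul (Real.exp_pos ε).le,
    ← ENNReal.ofReal_add (mul_nonneg (Real.exp_pos ε).le (prob_nonneg _ _)) hδ]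
  refine ENNReal.ofReal_le_ofReal ?_
  by_cases h : z = S i
  · rw [h, update_eq_self]
    exact le_add_of_le_of_nonneg
      (le_mul_of_one_le_left (prob_nonneg _ _) (Real.one_le_exp hε)) hδ
  · exact hDP _ _ (neighbors_update h) T

theorem IsDifferentiallyPrivate.map_apply_le_update {γ : Type*}
    (hDP : IsDifferentiallyPrivate κ ε δ) (hε : 0 ≤ ε) (hδ : 0 ≤ δ) (f : α → γ) (c : γ)
    (S : Fin n → Z) (i : Fin n) (z : Z) :
    (κ S).map f c
      ≤ ENNReal.ofReal (Real.exp ε) * (κ (update S i z)).map f c + ENNReal.ofReal δ := by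
  simp_rw [← PMF.toOuterMeasure_apply_singleton, PMF.toOuterMeasure_map_apply]
  exact hDP.toOuterMeasure_le_update hε hδ S i z _

end DifferentialPrivacy

section SelectedSamples

variable {Z : Type*} {n k : ℕ} {κ : (Fin n → Z) → PMF (Fin k → Fin n)} {E : Set Z}

/-- The expectation of `Z(S)` over the internal randomness of `κ`. -/
noncomputable def expectedFractionIn (κ : (Fin n → Z) → PMF (Fin k → Fin n)) (E : Set Z)
    (S : Fin n → Z) : ℝ≥0∞ :=
  ∑ I, κ S I * ((k : ℝ≥0∞)⁻¹ * ∑ j, E.indicator 1 (S (I j)))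

theorem expectedFractionIn_le_one (hk : k ≠ 0) (S : Fin n → Z) :
    expectedFractionIn κ E S ≤ 1 := calc
  expectedFractionIn κ E S ≤ ∑ I, κ S I * ((k : ℝ≥0∞)⁻¹ * ∑ _j : Fin k, 1) := by
    unfold expectedFractionIn
    gcongr
    exact Set.indicator_le_self' (fun _ _ => zero_le_one) _
  _ = 1 := by simp_rw [ENNReal.inv_natCast_mul_sum_const hk, mul_one, PMF.sum_coe_eq_one]

theorem toReal_expectedFractionIn (hk : k ≠ 0) (S : Fin n → Z) :
    (expectedFractionIn κ E S).toReal = ∑ I, (κ S I).toReal *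
      ((1 / (k : ℝ)) * ∑ j, E.indicator (fun _ => (1 : ℝ)) (S (I j))) := by
  have hne (I : Fin k → Fin n) : ∀ j ∈ univ, E.indicator (1 : Z → ℝ≥0∞) (S (I j)) ≠ ∞ :=
    fun j _ => E.indicator_one_ne_top _
  rw [expectedFractionIn, ENNReal.toReal_sum fun I _ => ENNReal.mul_ne_top (PMF.apply_ne_top _ _)
    (ENNReal.mul_ne_top (by simpa using hk) (ENNReal.sum_ne_top.2 (hne I)))]
  simp_rw [ENNReal.toReal_mul, ENNReal.toReal_sum (hne _), Set.toReal_indicator_one]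
  simp

variable [MeasurableSpace Z] {D : Measure Z} {ε δ : ℝ}

noncomputable def probSelectedMem (D : Measure Z) (κ : (Fin n → Z) → PMF (Fin k → Fin n))
    (E : Set Z) (j : Fin k) : ℝ≥0∞ :=
  ∫⁻ S, ∑ I, κ S I * E.indicator 1 (S (I j)) ∂Measure.pi fun _ => D

theorem measurable_expectedFractionIn (hκ : ∀ T, Measurable fun S => prob (κ S) T)
    (hE : MeasurableSet E) : Measurable (expectedFractionIn κ E) :=
  Finset.measurable_sum _ fun I _ => (measurable_pmf_apply hκ I).mul <| measurable_const.mul <|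
    Finset.measurable_sum _ fun _ _ => (measurable_const.indicator hE).comp (measurable_pi_apply _)

theorem integral_eq_toReal_lintegral_expectedFractionIn (hk : k ≠ 0)
    (hκ : ∀ T, Measurable fun S => prob (κ S) T) (hE : MeasurableSet E) :
    ∫ S, (∑ I, (κ S I).toReal * ((1 / (k : ℝ)) * ∑ j, E.indicator (fun _ => (1 : ℝ)) (S (I j))))
        ∂Measure.pi (fun _ => D)
      = (∫⁻ S, expectedFractionIn κ E S ∂Measure.pi (fun _ => D)).toReal := by
  simp_rw [← toReal_expectedFractionIn hk]
  exact integral_toReal (measurable_expectedFractionIn hκ hE).aemeasurable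
    (.of_forall fun S => (expectedFractionIn_le_one hk S).trans_lt ENNReal.one_lt_top)

theorem lintegral_expectedFractionIn (hκ : ∀ T, Measurable fun S => prob (κ S) T)
    (hE : MeasurableSet E) :
    ∫⁻ S, expectedFractionIn κ E S ∂Measure.pi (fun _ => D)
      = (k : ℝ≥0∞)⁻¹ * ∑ j, probSelectedMem D κ E j := by
  have h (S : Fin n → Z) : expectedFractionIn κ E S
      = (k : ℝ≥0∞)⁻¹ * ∑ j, ∑ I, κ S I * E.indicator 1 (S (I j)) := by
    simp_rw [expectedFractionIn, mul_sum, mul_left_comm _ (k : ℝ≥0∞)⁻¹]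
    exact sum_comm
  have hm (j : Fin k) : Measurable fun S : Fin n → Z => ∑ I, κ S I * E.indicator 1 (S (I j)) :=
    Finset.measurable_sum _ fun I _ =>
      (measurable_pmf_apply hκ I).mul ((measurable_const.indicator hE).comp (measurable_pi_apply _))
  simp_rw [h, probSelectedMem]
  rw [lintegral_const_mul _ (Finset.measurable_sum _ fun j _ => hm j),
    lintegral_finsetSum _ fun j _ => hm j]

theorem probSelectedMem_eq (hκ : ∀ T, Measurable fun S => prob (κ S) T) (hE : MeasurableSet E)
    (j : Fin k) :
    probSelectedMem D κ E j
      = ∑ i, ∫⁻ S, (κ S).map (· j) i * E.indicator 1 (S i) ∂Measure.pi fun _ => D := by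
  have h (S : Fin n → Z) : ∑ I, κ S I * E.indicator 1 (S (I j))
      = ∑ i, (κ S).map (· j) i * E.indicator 1 (S i) :=
    PMF.sum_mul_comp _ (fun I : Fin k → Fin n => I j) fun i => E.indicator 1 (S i)
  simp_rw [probSelectedMem, h]
  exact lintegral_finsetSum _ fun i _ => (measurable_pmf_map_apply hκ _ i).mul
    ((measurable_const.indicator hE).comp (measurable_pi_apply i))

variable [IsProbabilityMeasure D]

theorem sum_lintegral_map_apply (hκ : ∀ T, Measurable fun S => prob (κ S) T) (j : Fin k) :
    ∑ i, ∫⁻ S, (κ S).map (· j) i ∂Measure.pi (fun _ => D) = 1 := by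
  rw [← lintegral_finsetSum _ fun i _ => measurable_pmf_map_apply hκ _ i]
  simp_rw [PMF.sum_coe_eq_one]
  simp

theorem probSelectedMem_le (hDP : IsDifferentiallyPrivate κ ε δ) (hε : 0 ≤ ε) (hδ : 0 ≤ δ)
    (hκ : ∀ T, Measurable fun S => prob (κ S) T) (hE : MeasurableSet E) (j : Fin k) :
    probSelectedMem D κ E j ≤ ENNReal.ofReal (Real.exp ε) * D E + n * ENNReal.ofReal δ := by
  rw [probSelectedMem_eq hκ hE]
  simpa only [Fintype.card_fin] using
    ENNReal.sum_le_mul_add_card_mul (sum_lintegral_map_apply hκ j) prob_le_one fun i => by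
      rw [← lintegral_indicator_one hE]
      exact lintegral_mul_apply_le (μ := fun _ => D) (measurable_pmf_map_apply hκ _ i)
        (hDP.map_apply_le_update hε hδ _ i · i) (measurable_const.indicator hE)

theorem le_probSelectedMem (hDP : IsDifferentiallyPrivate κ ε δ) (hε : 0 ≤ ε) (hδ : 0 ≤ δ)
    (hκ : ∀ T, Measurable fun S => prob (κ S) T) (hE : MeasurableSet E) (j : Fin k) :
    D E ≤ ENNReal.ofReal (Real.exp ε) * probSelectedMem D κ E j + n * ENNReal.ofReal δ := by
  rw [probSelectedMem_eq hκ hE]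
  simpa only [Fintype.card_fin] using
    ENNReal.le_mul_sum_add_card_mul (sum_lintegral_map_apply hκ j) prob_le_one fun i => by
      rw [← lintegral_indicator_one hE]
      exact lintegral_mul_lintegral_le (μ := fun _ => D) (measurable_pmf_map_apply hκ _ i)
        (hDP.map_apply_le_update hε hδ _ i · i) (measurable_const.indicator hE)

theorem lintegral_expectedFractionIn_le (hk : k ≠ 0) (hDP : IsDifferentiallyPrivate κ ε δ)
    (hε : 0 ≤ ε) (hδ : 0 ≤ δ) (hκ : ∀ T, Measurable fun S => prob (κ S) T)
    (hE : MeasurableSet E) :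
    ∫⁻ S, expectedFractionIn κ E S ∂Measure.pi (fun _ => D)
      ≤ ENNReal.ofReal (Real.exp ε) * D E + n * ENNReal.ofReal δ := by
  rw [lintegral_expectedFractionIn hκ hE, ← ENNReal.inv_natCast_mul_sum_const hk (_ + _)]
  gcongr with j
  exact probSelectedMem_le hDP hε hδ hκ hE j

theorem le_lintegral_expectedFractionIn (hk : k ≠ 0) (hDP : IsDifferentiallyPrivate κ ε δ)
    (hε : 0 ≤ ε) (hδ : 0 ≤ δ) (hκ : ∀ T, Measurable fun S => prob (κ S) T)
    (hE : MeasurableSet E) :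
    D E ≤ ENNReal.ofReal (Real.exp ε) * ∫⁻ S, expectedFractionIn κ E S ∂Measure.pi (fun _ => D)
      + n * ENNReal.ofReal δ := calc
  D E = (k : ℝ≥0∞)⁻¹ * ∑ _j : Fin k, D E := (ENNReal.inv_natCast_mul_sum_const hk _).symm
  _ ≤ (k : ℝ≥0∞)⁻¹ * ∑ j, (ENNReal.ofReal (Real.exp ε) * probSelectedMem D κ E j
      + n * ENNReal.ofReal δ) := by
    gcongr with j
    exact le_probSelectedMem hDP hε hδ hκ hE j
  _ = _ := by
    rw [lintegral_expectedFractionIn hκ hE, sum_add_distrib, mul_add,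
      ENNReal.inv_natCast_mul_sum_const hk, ← mul_sum, mul_left_comm]

end SelectedSamples

/-- Let `κ : Z^n → [n]^k` be the (`(ε,δ)`-DP) compression function
of an `(ε,δ)` sample DP `(n → k)`-compression scheme, `D` a probability
distribution over `Z` and `E ⊆ Z` an event with `p = D(E)`.  For
`S = (z_1,…,z_n) ~ D^n`, the expectation (over `S` and the internal randomness
of `κ`) of `Z(S) = (1/k)·∑_{i ∈ κ(S)} 1[z_i ∈ E]` satisfies
`p·e^{−ε} − δ·n ≤ E[Z] ≤ p·e^{ε} + δ·n`. -/
theorem stmt2 {Z : Type*} [MeasurableSpace Z] (n k : ℕ) (hk : 0 < k)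
    (ε δ : ℝ) (hε : 0 ≤ ε) (hδ : 0 ≤ δ)
    (κ : (Fin n → Z) → PMF (Fin k → Fin n))
    (hmeas : ∀ T : Set (Fin k → Fin n), Measurable fun S => prob (κ S) T)
    (hDP : ∀ S S', Neighbors S S' → ∀ T : Set (Fin k → Fin n),
      prob (κ S) T ≤ Real.exp ε * prob (κ S') T + δ)
    (D : Measure Z) [IsProbabilityMeasure D] (E : Set Z) (hE : MeasurableSet E)
    (p : ℝ) (hp : p = (D E).toReal) :
    p * Real.exp (-ε) - δ * n ≤
      (∫ S, (∑ I : Fin k → Fin n, ((κ S) I).toReal *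
          ((1 / (k:ℝ)) * ∑ j : Fin k, E.indicator (fun _ => (1:ℝ)) (S (I j))))
        ∂(Measure.pi fun _ : Fin n => D)) ∧
    (∫ S, (∑ I : Fin k → Fin n, ((κ S) I).toReal *
          ((1 / (k:ℝ)) * ∑ j : Fin k, E.indicator (fun _ => (1:ℝ)) (S (I j))))
        ∂(Measure.pi fun _ : Fin n => D))
      ≤ p * Real.exp ε + δ * n := by
  have hk : k ≠ 0 := hk.ne'
  rw [integral_eq_toReal_lintegral_expectedFractionIn hk hmeas hE]
  set Y := ∫⁻ S, expectedFractionIn κ E S ∂Measure.pi (fun _ => D)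
  have hY : Y ≠ ∞ := ne_top_of_le_ne_top ENNReal.one_ne_top <| by
    simpa using lintegral_mono (μ := Measure.pi fun _ => D) (expectedFractionIn_le_one hk)
  have hup := ENNReal.toReal_mono (by finiteness)
    (lintegral_expectedFractionIn_le (D := D) hk hDP hε hδ hmeas hE)
  have hlow := ENNReal.toReal_mono (by finiteness)
    (le_lintegral_expectedFractionIn (D := D) hk hDP hε hδ hmeas hE)
  rw [ENNReal.toReal_add (by finiteness) (by finiteness)] at hup hlow
  simp only [ENNReal.toReal_mul, ENNReal.toReal_ofReal (Real.exp_pos ε).le, ENNReal.toReal_natCast,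
    ENNReal.toReal_ofReal hδ, ← hp] at hup hlow
  refine ⟨?_, by linarith⟩
  have hlow' : p * Real.exp (-ε) ≤ Y.toReal + n * δ * Real.exp (-ε) := by
    have := mul_le_mul_of_nonneg_right hlow (Real.exp_pos (-ε)).le
    rwa [add_mul, mul_right_comm, ← Real.exp_add, add_neg_cancel, Real.exp_zero, one_mul] at this
  have hdecay : n * δ * Real.exp (-ε) ≤ δ * n := by
    rw [mul_comm (n : ℝ)]
    exact mul_le_of_le_one_right (by positivity) (Real.exp_le_one_iff.2 (neg_nonpos.2 hε))
  linarith
end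

section
/- Let ε ≥ 0, p ∈ (0,1), and 1 ≤ k ≤ n. Let D be the product distribution on {0,1}^n in which each coordinate independently equals 1 with probability p, and let RR be the randomized-response selection mechanism with flip probability 1/(1+e^ε). For X ~ D and I = RR(X), let Z = (1/k)·Σ_{j ∈ I} 1[X_j = 1]. Then E[Z] ≥ (1 − k·n^k·exp((k−n)·(1−p+p·e^ε)/(1+e^ε))) · (p·e^ε)/(1−p+p·e^ε), where the expectation is over X and the internal randomness of RR. -/
open MeasureTheory

/-- Probability of the string `x` under the product Bernoulli(p) distribution. -/
noncomputable def weight {n : ℕ} (p : ℝ) (x : Fin n → Bool) : ℝ :=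
  ∏ i, if x i then p else 1 - p

/-- The distribution of `n` i.i.d. samples from `μ`. -/
noncomputable def pmfPi {α : Type*} : (n : ℕ) → PMF α → PMF (Fin n → α)
  | 0, _ => PMF.pure (fun i => i.elim0)
  | n+1, μ => μ.bind fun b => (pmfPi n μ).bind fun g => PMF.pure (Fin.cons b g)

/-- Bernoulli distribution on `Bool` with success probability `1/(1+e^ε)`
(the flip probability of randomized response). -/
noncomputable def flipPMF (ε : ℝ) : PMF Bool :=
  PMF.bernoulli (Real.toNNReal (1 / (1 + Real.exp ε)))
    (by
      rw [Real.toNNReal_le_one, div_le_one (by positivity)]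
      nlinarith [Real.exp_pos ε])

/-- Given the flipped string `y`, output the selected set: if
`S = {i : y i = 1}` has at least `k` elements, a uniformly random `k`-subset of
`S`; otherwise `S` together with a uniformly random `(k−|S|)`-subset of its
complement.  (The selected indices are "ordered arbitrarily", so the output is
modeled as the set of `k` selected indices.) -/
noncomputable def rrSelect (n k : ℕ) (hk : k ≤ n) (y : Fin n → Bool) :
    PMF (Finset (Fin n)) :=
  if h : k ≤ (Finset.univ.filter fun i => y i = true).card then
    PMF.uniformOfFinset ((Finset.univ.filter fun i => y i = true).powersetCard k)
      (Finset.powersetCard_nonempty.2 h)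
  else
    (PMF.uniformOfFinset
        ((Finset.univ.filter fun i => y i = true)ᶜ.powersetCard
          (k - (Finset.univ.filter fun i => y i = true).card))
        (Finset.powersetCard_nonempty.2 (by
          rw [Finset.card_compl, Fintype.card_fin]; omega))).map
      fun T => (Finset.univ.filter fun i => y i = true) ∪ T

/-- The randomized-response selection mechanism `RR : {0,1}^n → [n]^k` with flip
probability `1/(1+e^ε)`: flip each bit of `x` independently with probability
`1/(1+e^ε)`, then select as in `rrSelect`. -/
noncomputable def RR (n k : ℕ) (hk : k ≤ n) (ε : ℝ) (x : Fin n → Bool) :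
    PMF (Finset (Fin n)) :=
  (pmfPi n (flipPMF ε)).bind fun f => rrSelect n k hk fun i => xor (x i) (f i)

/-!
Let `q = 1/(1+e^ε)` and let `Y = X xor F` be the noisy string from which `RR` selects. The
coordinates of `Y` are independent Bernoulli(`β`) with `β = p(1-q) + (1-p)q`, and
`P(X_i = 1 | Y_i = 1) = p(1-q)/β = p e^ε / (1-p+p e^ε)`. When `Y` has at least `k` ones, `RR`
selects only indices with `Y_i = 1`, so `E[Z | Y]` equals this ratio; otherwise `E[Z | Y] ≥ 0`.
The event that `Y` has fewer than `k` ones has probability at most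
`#{y | #y < k} · (1-β)^(n-k) ≤ k n^k e^(-β(n-k))`.
-/
open Finset

lemma pmfPi_apply {α : Type*} (n : ℕ) (μ : PMF α) (f : Fin n → α) :
    pmfPi n μ f = ∏ i, μ (f i) := by
  induction n with
  | zero => simp [pmfPi, Subsingleton.elim f fun i => i.elim0]
  | succ n ih =>
    rw [pmfPi, PMF.bind_apply, tsum_eq_single (f 0), PMF.bind_apply, tsum_eq_single (Fin.tail f),
      PMF.pure_apply, if_pos (Fin.cons_self_tail f).symm, mul_one, ih, Fin.prod_univ_succ]
    · rfl
    · intro g hg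
      rw [PMF.pure_apply, if_neg fun h => hg (by rw [h, Fin.tail_cons]), mul_zero]
    · intro b hb
      refine mul_eq_zero_of_right _ (ENNReal.tsum_eq_zero.2 fun g => ?_)
      rw [PMF.pure_apply, if_neg fun h => hb (by rw [h, Fin.cons_zero]), mul_zero]

lemma PMF.sum_toReal_mul_eq_of_support {α : Type*} [Fintype α] (μ : PMF α) {g : α → ℝ} {c : ℝ}
    (h : ∀ a ∈ μ.support, g a = c) : ∑ a, (μ a).toReal * g a = c := by
  have hμ : ∑ a, (μ a).toReal = 1 := by
    have h1 := μ.tsum_coe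
    rw [tsum_fintype] at h1
    rw [← ENNReal.toReal_sum fun a _ => μ.apply_ne_top a, h1, ENNReal.toReal_one]
  calc ∑ a, (μ a).toReal * g a = ∑ a, (μ a).toReal * c := by
        refine sum_congr rfl fun a _ => ?_
        by_cases ha : a ∈ μ.support
        · rw [h a ha]
        · rw [PMF.apply_eq_zero_iff _ _ |>.2 ha, ENNReal.toReal_zero, zero_mul, zero_mul]
    _ = c := by rw [← sum_mul, hμ, one_mul]

def bernWeight (p : ℝ) (b : Bool) : ℝ := if b then p else 1 - p

lemma weight_eq_prod_bernWeight {n : ℕ} (p : ℝ) (x : Fin n → Bool) :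
    weight p x = ∏ i, bernWeight p (x i) := rfl

lemma sum_weight {n : ℕ} (p : ℝ) : ∑ x : Fin n → Bool, weight p x = 1 := by
  simp only [weight_eq_prod_bernWeight]
  rw [← Fintype.prod_sum]
  simp [bernWeight]

lemma weight_eq_pow_card {n : ℕ} (p : ℝ) (y : Fin n → Bool) :
    weight p y = p ^ #{i | y i} * (1 - p) ^ (n - #{i | y i}) := by
  have hcompl := card_filter_add_card_filter_not (s := univ) (p := fun i : Fin n => y i = true)
  rw [card_univ, Fintype.card_fin] at hcompl
  rw [weight, prod_ite, prod_const, prod_const]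
  congr 2
  omega

lemma flipPMF_apply_toReal (ε : ℝ) (b : Bool) :
    (flipPMF ε b).toReal = bernWeight (1 / (1 + Real.exp ε)) b := by
  have hq : Real.toNNReal (1 / (1 + Real.exp ε)) ≤ 1 := by
    rw [Real.toNNReal_le_one, div_le_one (by positivity)]
    linarith [Real.exp_pos ε]
  have hq0 : (0:ℝ) ≤ 1 / (1 + Real.exp ε) := by positivity
  cases b
  · rw [flipPMF, PMF.bernoulli_apply, Bool.cond_false, ENNReal.coe_toReal, NNReal.coe_sub hq,
      NNReal.coe_one, Real.coe_toNNReal _ hq0]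
    rfl
  · rw [flipPMF, PMF.bernoulli_apply, Bool.cond_true, ENNReal.coe_toReal, Real.coe_toNNReal _ hq0]
    rfl

def noisyProb (p q : ℝ) : ℝ := p * (1 - q) + (1 - p) * q

lemma sum_bernWeight_mul_bernWeight_xor (p q : ℝ) (c : Bool) :
    ∑ b, bernWeight p b * bernWeight q (xor b c) = bernWeight (noisyProb p q) c := by
  cases c
  · simp [bernWeight, noisyProb]
    ring
  · simp [bernWeight, noisyProb]

lemma sum_weight_mul_weight_xor_mul_indicator {n : ℕ} (p q : ℝ) (hβ : noisyProb p q ≠ 0)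
    (y : Fin n → Bool) {i : Fin n} (hy : y i = true) :
    ∑ x : Fin n → Bool, weight p x * weight q (fun j => xor (x j) (y j)) * (if x i then 1 else 0)
      = p * (1 - q) / noisyProb p q * weight (noisyProb p q) y := by
  set f : Fin n → Bool → ℝ := fun j b =>
    bernWeight p b * bernWeight q (xor b (y j)) * (if j = i then (if b then 1 else 0) else 1)
  have hsummand (x : Fin n → Bool) :
      weight p x * weight q (fun j => xor (x j) (y j)) * (if x i then 1 else 0) = ∏ j, f j (x j) := by
    simp only [f, prod_mul_distrib, prod_ite_eq', mem_univ, if_true]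
    rfl
  have hfactor (j : Fin n) : ∑ b, f j b
      = bernWeight (noisyProb p q) (y j) * (if j = i then p * (1 - q) / noisyProb p q else 1) := by
    by_cases hj : j = i
    · subst hj
      simp [f, hy, bernWeight, mul_div_cancel₀ _ hβ]
    · simp only [f, hj, if_false, mul_one, sum_bernWeight_mul_bernWeight_xor]
  simp_rw [hsummand, ← Fintype.prod_sum, hfactor, prod_mul_distrib, prod_ite_eq', mem_univ, if_true]
  rw [mul_comm]
  rfl

lemma RR_apply_toReal (n k : ℕ) (hk : k ≤ n) (ε : ℝ) (x : Fin n → Bool) (I : Finset (Fin n)) :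
    (RR n k hk ε x I).toReal = ∑ y, weight (1 / (1 + Real.exp ε)) (fun j => xor (x j) (y j)) *
      (rrSelect n k hk y I).toReal := by
  rw [RR, PMF.bind_apply, tsum_fintype,
    ENNReal.toReal_sum fun f _ => ENNReal.mul_ne_top (PMF.apply_ne_top _ _) (PMF.apply_ne_top _ _)]
  have hxor : Function.Involutive fun (f : Fin n → Bool) j => xor (x j) (f j) := fun f => by
    ext j; simp
  refine Fintype.sum_bijective _ hxor.bijective _ _ fun f => ?_
  simp [pmfPi_apply, ENNReal.toReal_prod, flipPMF_apply_toReal, weight_eq_prod_bernWeight]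

lemma mem_powersetCard_of_mem_support_rrSelect {n k : ℕ} (hk : k ≤ n) {y : Fin n → Bool}
    (hy : k ≤ #{i | y i}) {I : Finset (Fin n)} (hI : I ∈ (rrSelect n k hk y).support) :
    I ∈ powersetCard k {i | y i} := by
  rwa [rrSelect, dif_pos hy, PMF.mem_support_uniformOfFinset_iff] at hI

lemma card_filter_card_lt_le {n k : ℕ} (hkn : k ≤ n) :
    #{y : Fin n → Bool | #{i | y i} < k} ≤ k * n ^ k := by
  have hinj : Set.InjOn (fun y : Fin n → Bool => ({i | y i} : Finset (Fin n)))
      {y | #{i | y i} < k} := by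
    intro y _ y' _ h
    ext i
    simpa using congrArg (i ∈ ·) h
  calc #{y : Fin n → Bool | #{i | y i} < k}
      ≤ #((range k).biUnion fun t => powersetCard t (univ : Finset (Fin n))) := by
        refine card_le_card_of_injOn _ (fun y hy => ?_) (by simpa using hinj)
        simp only [coe_filter, mem_univ, true_and, Set.mem_ofPred_eq] at hy
        simpa using hy
    _ ≤ ∑ t ∈ range k, n.choose t := by
        refine card_biUnion_le.trans (sum_le_sum fun t _ => ?_)
        simp
    _ ≤ ∑ t ∈ range k, n ^ k := by
        refine sum_le_sum fun t ht => (Nat.choose_le_pow n t).trans ?_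
        exact Nat.pow_le_pow_right (by have := mem_range.1 ht; omega) (mem_range.1 ht).le
    _ = k * n ^ k := by simp

lemma weight_nonneg {n : ℕ} {p : ℝ} (hp0 : 0 ≤ p) (hp1 : p ≤ 1) (x : Fin n → Bool) :
    0 ≤ weight p x :=
  prod_nonneg fun i _ => by split <;> linarith

lemma sum_weight_filter_card_lt_le {n k : ℕ} {β : ℝ} (hβ0 : 0 ≤ β) (hβ1 : β ≤ 1) (hkn : k ≤ n) :
    ∑ y : Fin n → Bool with #{i | y i} < k, weight β y ≤ k * n ^ k * Real.exp (-(β * (n - k))) := by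
  have hweight (y : Fin n → Bool) (hy : #{i | y i} < k) : weight β y ≤ (1 - β) ^ (n - k) := by
    rw [weight_eq_pow_card]
    calc β ^ #{i | y i} * (1 - β) ^ (n - #{i | y i}) ≤ 1 * (1 - β) ^ (n - k) := by
          refine mul_le_mul (pow_le_one₀ hβ0 hβ1) ?_ (by bound) zero_le_one
          exact pow_le_pow_of_le_one (by linarith) (by linarith) (by omega)
      _ = (1 - β) ^ (n - k) := one_mul _
  calc ∑ y : Fin n → Bool with #{i | y i} < k, weight β y
      ≤ #{y : Fin n → Bool | #{i | y i} < k} * (1 - β) ^ (n - k) := by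
        rw [← nsmul_eq_mul, ← sum_const]
        exact sum_le_sum fun y hy => hweight y (mem_filter.1 hy).2
    _ ≤ k * n ^ k * Real.exp (-β) ^ (n - k) := by
        refine mul_le_mul (by exact_mod_cast card_filter_card_lt_le hkn) ?_ (by bound) (by positivity)
        exact pow_le_pow_left₀ (by linarith) (by linarith [Real.add_one_le_exp (-β)]) _
    _ = k * n ^ k * Real.exp (-(β * (n - k))) := by
        rw [← Real.exp_nat_mul, Nat.cast_sub hkn]
        ring_nf

/-- `E[Z; Y = y]`: the contribution of the noisy string `y` to the expectation of `Z`. -/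
noncomputable def partialExpectation {n : ℕ} (p q : ℝ) (k : ℕ) (hk : k ≤ n) (y : Fin n → Bool) :
    ℝ :=
  ∑ I : Finset (Fin n), (rrSelect n k hk y I).toReal * ((1 / (k:ℝ)) * ∑ i ∈ I,
    ∑ x : Fin n → Bool, weight p x * weight q (fun j => xor (x j) (y j)) * (if x i then 1 else 0))

lemma partialExpectation_nonneg {n k : ℕ} (hk : k ≤ n) {p q : ℝ} (hp0 : 0 ≤ p) (hp1 : p ≤ 1)
    (hq0 : 0 ≤ q) (hq1 : q ≤ 1) (y : Fin n → Bool) : 0 ≤ partialExpectation p q k hk y := by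
  unfold partialExpectation
  refine sum_nonneg fun I _ => mul_nonneg ENNReal.toReal_nonneg (mul_nonneg (by positivity) ?_)
  refine sum_nonneg fun i _ => sum_nonneg fun x _ => ?_
  have := weight_nonneg hp0 hp1 x
  have := weight_nonneg hq0 hq1 fun j => xor (x j) (y j)
  positivity

lemma partialExpectation_of_le {n k : ℕ} (hk : k ≤ n) (hk0 : k ≠ 0) {p q : ℝ}
    (hβ : noisyProb p q ≠ 0) {y : Fin n → Bool} (hy : k ≤ #{i | y i}) :
    partialExpectation p q k hk y = p * (1 - q) / noisyProb p q * weight (noisyProb p q) y := by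
  refine PMF.sum_toReal_mul_eq_of_support _ fun I hI => ?_
  obtain ⟨hIS, hIk⟩ := mem_powersetCard.1 (mem_powersetCard_of_mem_support_rrSelect hk hy hI)
  rw [sum_congr rfl fun i hi => sum_weight_mul_weight_xor_mul_indicator p q hβ y
    (mem_filter.1 (hIS hi)).2, sum_const, hIk, nsmul_eq_mul]
  field_simp

lemma sum_weight_mul_expectation_RR {n k : ℕ} (hk : k ≤ n) (p ε : ℝ) :
    ∑ x : Fin n → Bool, weight p x * ∑ I : Finset (Fin n), (RR n k hk ε x I).toReal *
        ((1 / (k:ℝ)) * ∑ i ∈ I, (if x i then (1:ℝ) else 0))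
      = ∑ y, partialExpectation p (1 / (1 + Real.exp ε)) k hk y := by
  simp only [partialExpectation, RR_apply_toReal, mul_sum, sum_mul]
  rw [sum_comm]
  conv_rhs => rw [sum_comm]
  refine sum_congr rfl fun I _ => ?_
  rw [sum_comm]
  conv_rhs => rw [sum_comm]
  refine sum_congr rfl fun i _ => ?_
  rw [sum_comm]
  exact sum_congr rfl fun y _ => sum_congr rfl fun x _ => by ring

lemma noisyProb_mem_Ioo {p q : ℝ} (hp0 : 0 ≤ p) (hp1 : p ≤ 1) (hq0 : 0 < q) (hq1 : q < 1) :
    noisyProb p q ∈ Set.Ioo 0 1 := by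
  have h1q : 0 < 1 - q := sub_pos.2 hq1
  have h1p : 0 ≤ 1 - p := sub_nonneg.2 hp1
  constructor <;> rw [noisyProb] <;>
    nlinarith [mul_pos hq0 h1q, mul_nonneg (mul_nonneg hp0 h1q.le) h1q.le,
      mul_nonneg (mul_nonneg h1p hq0.le) hq0.le, mul_nonneg (mul_nonneg hp0 hq0.le) hq0.le,
      mul_nonneg (mul_nonneg h1p h1q.le) h1q.le]

lemma le_sum_partialExpectation {n k : ℕ} (hk0 : k ≠ 0) (hkn : k ≤ n) {p q : ℝ} (hp0 : 0 ≤ p)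
    (hp1 : p ≤ 1) (hq0 : 0 < q) (hq1 : q < 1) :
    (1 - k * n ^ k * Real.exp (-(noisyProb p q * (n - k)))) * (p * (1 - q) / noisyProb p q)
      ≤ ∑ y, partialExpectation p q k hkn y := by
  set β := noisyProb p q
  obtain ⟨hβ0, hβ1⟩ := noisyProb_mem_Ioo hp0 hp1 hq0 hq1
  have hsplit := sum_filter_add_sum_filter_not univ (fun y : Fin n → Bool => #{i | y i} < k)
    (weight β)
  rw [sum_weight] at hsplit
  calc (1 - k * n ^ k * Real.exp (-(β * (n - k)))) * (p * (1 - q) / β)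
      ≤ (∑ y : Fin n → Bool with ¬ #{i | y i} < k, weight β y) * (p * (1 - q) / β) := by
        gcongr
        linarith [sum_weight_filter_card_lt_le hβ0.le hβ1.le hkn]
    _ = ∑ y : Fin n → Bool with ¬ #{i | y i} < k, partialExpectation p q k hkn y := by
        rw [sum_mul]
        refine sum_congr rfl fun y hy => ?_
        rw [partialExpectation_of_le hkn hk0 hβ0.ne' (not_lt.1 (mem_filter.1 hy).2), mul_comm]
    _ ≤ ∑ y, partialExpectation p q k hkn y :=
        sum_le_sum_of_subset_of_nonneg (filter_subset _ _) fun y _ _ =>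
          partialExpectation_nonneg hkn hp0 hp1 hq0.le hq1.le y

lemma noisyProb_flip (p ε : ℝ) :
    noisyProb p (1 / (1 + Real.exp ε)) = (1 - p + p * Real.exp ε) / (1 + Real.exp ε) := by
  rw [noisyProb]
  field_simp
  ring

theorem stmt8_general (ε : ℝ) (p : ℝ) (hp0 : 0 < p) (hp1 : p < 1)
    (n k : ℕ) (hk1 : 1 ≤ k) (hkn : k ≤ n) :
    (1 - (k:ℝ) * (n:ℝ)^k *
        Real.exp (((k:ℝ) - (n:ℝ)) * (1 - p + p * Real.exp ε) / (1 + Real.exp ε)))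
      * (p * Real.exp ε / (1 - p + p * Real.exp ε))
    ≤ ∑ x : Fin n → Bool, weight p x *
        ∑ I : Finset (Fin n), ((RR n k hkn ε x) I).toReal *
          ((1 / (k:ℝ)) * ∑ i ∈ I, (if x i then (1:ℝ) else 0)) := by
  have hE := Real.exp_pos ε
  have hq0 : 0 < 1 / (1 + Real.exp ε) := by positivity
  have hq1 : 1 / (1 + Real.exp ε) < 1 := by rw [div_lt_one (by positivity)]; linarith
  rw [sum_weight_mul_expectation_RR]
  convert le_sum_partialExpectation (by omega) hkn hp0.le hp1.le hq0 hq1 using 2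
  · rw [noisyProb_flip]
    congr 3
    ring
  · rw [noisyProb_flip]
    field_simp
    ring

/-- For `X` drawn from the product Bernoulli(`p`) distribution on
`{0,1}^n` and `I = RR(X)` the randomized-response selection with flip
probability `1/(1+e^ε)`, the expected fraction
`Z = (1/k)·∑_{j ∈ I} 1[X_j = 1]` (over `X` and the randomness of `RR`) satisfies
`E[Z] ≥ (1 − k·n^k·exp((k−n)·(1−p+p·e^ε)/(1+e^ε))) · p·e^ε/(1−p+p·e^ε)`. -/
theorem stmt8 (ε : ℝ) (hε : 0 ≤ ε) (p : ℝ) (hp0 : 0 < p) (hp1 : p < 1)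
    (n k : ℕ) (hk1 : 1 ≤ k) (hkn : k ≤ n) :
    (1 - (k:ℝ) * (n:ℝ)^k *
        Real.exp (((k:ℝ) - (n:ℝ)) * (1 - p + p * Real.exp ε) / (1 + Real.exp ε)))
      * (p * Real.exp ε / (1 - p + p * Real.exp ε))
    ≤ ∑ x : Fin n → Bool, weight p x *
        ∑ I : Finset (Fin n), ((RR n k hkn ε x) I).toReal *
          ((1 / (k:ℝ)) * ∑ i ∈ I, (if x i then (1:ℝ) else 0)) :=
  stmt8_general ε p hp0 hp1 n k hk1 hkn
end

section
/- Let ε, δ ≥ 0 be real numbers and let a, a', b, q, q' ∈ [0,1] satisfy q ≤ e^ε·q' + δ, 1 − q ≤ e^ε·(1 − q') + δ, and a ≤ min(1, e^ε·a') + δ. Then a·q + b·(1−q) ≤ e^{2ε}·(a'·q' + b·(1−q')) + 3δ. -/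
/-- If `q ≤ e^ε·q' + δ`, `1−q ≤ e^ε·(1−q') + δ` and
`a ≤ min 1 (e^ε·a') + δ` for `a, a', b, q, q' ∈ [0,1]` and `ε, δ ≥ 0`, then
`a·q + b·(1−q) ≤ e^{2ε}·(a'·q' + b·(1−q')) + 3δ`. -/
theorem stmt14 (ε δ a a' b q q' : ℝ) (hε : 0 ≤ ε) (hδ : 0 ≤ δ)
    (ha : a ∈ Set.Icc (0:ℝ) 1) (ha' : a' ∈ Set.Icc (0:ℝ) 1) (hb : b ∈ Set.Icc (0:ℝ) 1)
    (hq : q ∈ Set.Icc (0:ℝ) 1) (hq' : q' ∈ Set.Icc (0:ℝ) 1)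
    (h1 : q ≤ Real.exp ε * q' + δ) (h2 : 1 - q ≤ Real.exp ε * (1 - q') + δ)
    (h3 : a ≤ min 1 (Real.exp ε * a') + δ) :
    a * q + b * (1 - q) ≤ Real.exp (2*ε) * (a' * q' + b * (1 - q')) + 3*δ := by
  obtain ⟨ha0, ha1⟩ := ha
  obtain ⟨ha'0, ha'1⟩ := ha'
  obtain ⟨hb0, hb1⟩ := hb
  obtain ⟨hq0, hq1⟩ := hq
  obtain ⟨hq'0, hq'1⟩ := hq'
  set E := Real.exp ε with hEdef
  have hE1 : 1 ≤ E := Real.one_le_exp hε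
  have hE0 : 0 ≤ E := by linarith
  have h2e : Real.exp (2*ε) = E * E := by
    rw [hEdef, ← Real.exp_add]; ring_nf
  set m := min 1 (E * a') with hm
  have hm1 : m ≤ 1 := min_le_left _ _
  have hm2 : m ≤ E * a' := min_le_right _ _
  have hm0 : 0 ≤ m := le_min (by norm_num) (mul_nonneg hE0 ha'0)
  rw [h2e]
  -- a*q ≤ m*q + δ ≤ m*(E*q') + 2δ ≤ E*E*a'*q' + 2δ
  have step1 : a * q ≤ m * q + δ := by nlinarith
  have step2 : m * q ≤ E * E * (a' * q') + δ := by nlinarith [mul_nonneg hE0 hq'0, mul_nonneg (mul_nonneg hE0 hE0) (mul_nonneg ha'0 hq'0)]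
  have step3 : b * (1 - q) ≤ E * E * (b * (1 - q')) + δ := by
    nlinarith [mul_nonneg hb0 (by linarith : (0:ℝ) ≤ 1 - q'), mul_nonneg hE0 (mul_nonneg hb0 (by linarith : (0:ℝ) ≤ 1 - q'))]
  nlinarith
end
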